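/- arXiv:2106.04082 — 4 statements merged into one kernel-verified Lean document; each statement's English description precedes it below -/
import Mathlib

section
/- Shifted self-similarity of the binomial distribution: for 0 < a₁, a₂ < 1 and 0 ≤ y ≤ x ≤ N, Σ_{z=y}^{x} π_K(x−z, N−z, a₂)·π_K(z−y, N−y, a₁) = π_K(x−y, N−y, 1−(1−a₁)(1−a₂)). -/
/-!
Read probabilistically: from `n` trials, first mark each with probability `a₁`, then mark each
still unmarked trial with probability `a₂`; a trial ends up marked with probability
`1 - (1 - a₁)(1 - a₂)`, and the sum over the number `i` of first-round marks is the law of total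
probability. Algebraically, `choose n i * choose (n - i) (k - i) = choose n k * choose k i` pulls
`choose n k * ((1 - a₁)(1 - a₂)) ^ (n - k)` out of every term, and what remains is the binomial
expansion of `(a₁ + a₂ (1 - a₁)) ^ k`.
-/

noncomputable def piK (x N : ℕ) (p : ℝ) : ℝ := (Nat.choose N x : ℝ) * p ^ x * (1 - p) ^ (N - x)

open Finset

lemma piK_of_lt {x N : ℕ} (h : N < x) (p : ℝ) : piK x N p = 0 := by
  simp [piK, Nat.choose_eq_zero_of_lt h]

lemma piK_sub_mul_piK {a b : ℝ} {n k i : ℕ} (hik : i ≤ k) (hkn : k ≤ n) :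
    piK (k - i) (n - i) b * piK i n a =
      n.choose k * ((1 - a) * (1 - b)) ^ (n - k) *
        (a ^ i * (b * (1 - a)) ^ (k - i) * k.choose i) := by
  have hchoose : (n.choose i : ℝ) * (n - i).choose (k - i) = n.choose k * k.choose i := by
    exact_mod_cast (Nat.choose_mul hik).symm
  have hexp : n - i = (n - k) + (k - i) := by omega
  rw [piK, piK, show n - i - (k - i) = n - k by omega, hexp, pow_add, mul_pow, mul_pow,
    ← hexp]
  linear_combination (a ^ i * b ^ (k - i) * (1 - b) ^ (n - k) * (1 - a) ^ (n - k) *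
    (1 - a) ^ (k - i)) * hchoose

lemma sum_piK_sub_mul_piK (a b : ℝ) (n k : ℕ) :
    ∑ i ∈ range (k + 1), piK (k - i) (n - i) b * piK i n a =
      piK k n (1 - (1 - a) * (1 - b)) := by
  rcases lt_or_ge n k with hnk | hkn
  · rw [piK_of_lt hnk]
    refine sum_eq_zero fun i _ => ?_
    rcases lt_or_ge n i with hni | hin
    · rw [piK_of_lt hni, mul_zero]
    · rw [piK_of_lt (by omega : n - i < k - i), zero_mul]
  · rw [sum_congr rfl fun i hi => piK_sub_mul_piK (Nat.lt_succ_iff.mp (mem_range.mp hi)) hkn,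
      ← mul_sum, ← add_pow, piK]
    ring

theorem stmt_9_general (a₁ a₂ : ℝ)
    (N x y : ℕ) (hyx : y ≤ x) :
    ∑ z ∈ Finset.Icc y x, piK (x - z) (N - z) a₂ * piK (z - y) (N - y) a₁
      = piK (x - y) (N - y) (1 - (1 - a₁) * (1 - a₂)) := by
  rw [← sum_piK_sub_mul_piK, ← Ico_add_one_right_eq_Icc, sum_Ico_eq_sum_range,
    show x + 1 - y = x - y + 1 by omega]
  refine sum_congr rfl fun i _ => ?_
  rw [show x - (y + i) = x - y - i by omega, show N - (y + i) = N - y - i by omega,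
    Nat.add_sub_cancel_left]

theorem stmt_9 (a₁ a₂ : ℝ) (ha₁ : 0 < a₁) (ha₁' : a₁ < 1) (ha₂ : 0 < a₂) (ha₂' : a₂ < 1)
    (N x y : ℕ) (hyx : y ≤ x) (hxN : x ≤ N) :
    ∑ z ∈ Finset.Icc y x, piK (x - z) (N - z) a₂ * piK (z - y) (N - y) a₁
      = piK (x - y) (N - y) (1 - (1 - a₁) * (1 - a₂)) :=
  stmt_9_general a₁ a₂ N x y hyx
end

section
/- Hahn nested convolution identity: for a₁, b₁, b₂ > 0 and 0 ≤ x ≤ y, Σ_{z=x}^{y} π_H(x, z, a₁, b₁)·π_H(z, y, a₁+b₁, b₂) = π_H(x, y, a₁, b₁+b₂). -/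
noncomputable def risingFactorial (a : ℝ) (k : ℕ) : ℝ := ∏ j ∈ Finset.range k, (a + j)

noncomputable def piH (x N : ℕ) (a b : ℝ) : ℝ :=
  (Nat.choose N x : ℝ) * risingFactorial a x * risingFactorial b (N - x)
    / risingFactorial (a + b) N

/-!
The product of the two kernels factors as `π_H(x, y, a₁, b₁ + b₂) · π_H(z - x, y - x, b₁, b₂)`
(by the trinomial revision `C(z, x) C(y, z) = C(y, x) C(y - x, z - x)`), and the second factor is
the beta-binomial distribution in `z - x`, which sums to `1` by the Chu–Vandermonde identity for
rising factorials.
-/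

open Finset

theorem risingFactorial_succ (a : ℝ) (k : ℕ) :
    risingFactorial a (k + 1) = risingFactorial a k * (a + k) :=
  prod_range_succ _ _

theorem risingFactorial_pos {a : ℝ} (ha : 0 < a) (k : ℕ) : 0 < risingFactorial a k :=
  prod_pos fun j _ => by positivity

theorem risingFactorial_add (a b : ℝ) (n : ℕ) :
    risingFactorial (a + b) n =
      ∑ k ∈ range (n + 1), (n.choose k : ℝ) * (risingFactorial a k * risingFactorial b (n - k)) := by
  induction n with
  | zero => simp [risingFactorial]
  | succ n ih =>
    rw [sum_choose_succ_mul (fun i j => risingFactorial a i * risingFactorial b j),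
      risingFactorial_succ, ih, sum_mul, ← sum_add_distrib]
    refine sum_congr rfl fun k hk => ?_
    have hkn : k ≤ n := Nat.lt_succ_iff.mp (mem_range.mp hk)
    rw [Nat.sub_add_comm hkn, risingFactorial_succ, risingFactorial_succ, Nat.cast_sub hkn]
    ring

theorem sum_piH (b c : ℝ) (hb : 0 < b) (hc : 0 < c) (n : ℕ) :
    ∑ k ∈ range (n + 1), piH k n b c = 1 := by
  simp only [piH, ← sum_div, mul_assoc]
  rw [← risingFactorial_add, div_self (risingFactorial_pos (add_pos hb hc) n).ne']

theorem piH_mul_piH {a b c : ℝ} (ha : 0 < a) (hb : 0 < b) (hc : 0 < c) (x : ℕ) {k n : ℕ}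
    (hkn : k ≤ n) :
    piH x (x + k) a b * piH (x + k) (x + n) (a + b) c = piH x (x + n) a (b + c) * piH k n b c := by
  have hchoose : ((x + k).choose x : ℝ) * (x + n).choose (x + k) = (x + n).choose x * n.choose k := by
    have := Nat.choose_mul (n := x + n) (k := x + k) (s := x) (by omega)
    simp only [Nat.add_sub_cancel_left] at this
    exact_mod_cast (mul_comm _ _).trans this
  have hsub : x + n - (x + k) = n - k := by omega
  have h1 := (risingFactorial_pos (add_pos ha hb) (x + k)).ne'
  have h2 := (risingFactorial_pos (add_pos hb hc) n).ne'
  have h3 := (risingFactorial_pos (add_pos (add_pos ha hb) hc) (x + n)).ne'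
  simp only [piH, Nat.add_sub_cancel_left, hsub, ← add_assoc]
  field_simp
  linear_combination hchoose * (risingFactorial a x * risingFactorial b k * risingFactorial c (n - k))

theorem stmt_11 (a₁ b₁ b₂ : ℝ) (ha₁ : 0 < a₁) (hb₁ : 0 < b₁) (hb₂ : 0 < b₂)
    (x y : ℕ) (hxy : x ≤ y) :
    ∑ z ∈ Finset.Icc x y, piH x z a₁ b₁ * piH z y (a₁ + b₁) b₂
      = piH x y a₁ (b₁ + b₂) := by
  obtain ⟨n, rfl⟩ := Nat.exists_eq_add_of_le hxy
  calc ∑ z ∈ Icc x (x + n), piH x z a₁ b₁ * piH z (x + n) (a₁ + b₁) b₂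
      = ∑ k ∈ range (n + 1), piH x (x + k) a₁ b₁ * piH (x + k) (x + n) (a₁ + b₁) b₂ := by
        rw [← Ico_add_one_right_eq_Icc, sum_Ico_eq_sum_range, add_assoc, Nat.add_sub_cancel_left]
    _ = ∑ k ∈ range (n + 1), piH x (x + n) a₁ (b₁ + b₂) * piH k n b₁ b₂ :=
        sum_congr rfl fun k hk => piH_mul_piH ha₁ hb₁ hb₂ x (Nat.lt_succ_iff.mp (mem_range.mp hk))
    _ = piH x (x + n) a₁ (b₁ + b₂) := by rw [← mul_sum, sum_piH b₁ b₂ hb₁ hb₂, mul_one]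
end

section
/- The q-binomial (q-Vandermonde) identity: for 0 < q < 1, n ∈ ℤ_{≥0}, and real a, b, Σ_{k=0}^{n} [n choose k]_q (a;q)_k (b;q)_{n−k} a^{n−k} = (ab;q)_n, where [n choose k]_q = (q;q)_n/((q;q)_k(q;q)_{n−k}) and (a;q)_k = ∏_{j=0}^{k−1}(1−aq^j). -/
/-!
Induction on `n`. Expanding `1 - ab qⁿ = (1 - a qᵏ) + a qᵏ (1 - b qⁿ⁻ᵏ)` splits the `k`-th term of the
level-`n` sum, multiplied by `1 - ab qⁿ`, into two pieces; the q-Pascal rule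
`[n+1, k+1] = [n, k] + q^(k+1) [n, k+1]` reassembles these pieces, shifted against each other by one,
into the terms of the level-`(n+1)` sum.
-/

noncomputable def qPoch (a q : ℝ) (k : ℕ) : ℝ := ∏ j ∈ Finset.range k, (1 - a * q ^ j)

noncomputable def qBinom (n k : ℕ) (q : ℝ) : ℝ := qPoch q q n / (qPoch q q k * qPoch q q (n - k))

open Finset

theorem Finset.sum_range_add_two_eq_of_pascal {M : Type*} [AddCommMonoid M] (f g h : ℕ → M)
    (n : ℕ) (h_zero : f 0 = h 0) (h_last : f (n + 1) = g n)
    (h_mid : ∀ k < n, f (k + 1) = g k + h (k + 1)) :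
    ∑ k ∈ range (n + 2), f k = ∑ k ∈ range (n + 1), g k + ∑ k ∈ range (n + 1), h k := by
  rw [sum_range_succ', sum_range_succ, h_zero, h_last,
    sum_congr rfl fun k hk => h_mid k (mem_range.mp hk), sum_add_distrib,
    sum_range_succ g, sum_range_succ' h]
  abel

@[simp] lemma qPoch_zero (a q : ℝ) : qPoch a q 0 = 1 := rfl

lemma qPoch_succ (a q : ℝ) (k : ℕ) : qPoch a q (k + 1) = qPoch a q k * (1 - a * q ^ k) :=
  prod_range_succ _ _

lemma qPoch_self_pos {q : ℝ} (hq0 : 0 < q) (hq1 : q < 1) (k : ℕ) : 0 < qPoch q q k :=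
  prod_pos fun j _ => by
    have : q * q ^ j < 1 := by
      rw [← pow_succ']
      exact pow_lt_one₀ hq0.le hq1 j.succ_ne_zero
    linarith

section QBinom

variable {q : ℝ} (hq : ∀ k, qPoch q q k ≠ 0)
include hq

lemma qBinom_zero_right (n : ℕ) : qBinom n 0 q = 1 := by
  simp [qBinom, hq n]

lemma qBinom_self (n : ℕ) : qBinom n n q = 1 := by
  simp [qBinom, hq n]

lemma qBinom_succ_succ {n k : ℕ} (hk : k < n) :
    qBinom (n + 1) (k + 1) q = qBinom n k q + q ^ (k + 1) * qBinom n (k + 1) q := by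
  obtain ⟨m, rfl⟩ : ∃ m, n = k + m + 1 := ⟨n - k - 1, by omega⟩
  have factor_ne (j : ℕ) : 1 - q * q ^ j ≠ 0 := by
    have := hq (j + 1)
    rw [qPoch_succ] at this
    exact right_ne_zero_of_mul this
  simp only [qBinom, show k + m + 1 + 1 - (k + 1) = m + 1 by omega,
    show k + m + 1 - k = m + 1 by omega, show k + m + 1 - (k + 1) = m by omega,
    qPoch_succ q q (k + m + 1), qPoch_succ q q k, qPoch_succ q q m]
  have := hq k
  have := hq m
  have := factor_ne k
  have := factor_ne m
  field_simp
  ring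

end QBinom

noncomputable def qVandermondeTerm (a b q : ℝ) (n k : ℕ) : ℝ :=
  qBinom n k q * qPoch a q k * qPoch b q (n - k) * a ^ (n - k)

lemma sum_qVandermondeTerm_succ {q : ℝ} (hq : ∀ k, qPoch q q k ≠ 0) (a b : ℝ) (n : ℕ) :
    ∑ k ∈ range (n + 2), qVandermondeTerm a b q (n + 1) k
      = (∑ k ∈ range (n + 1), qVandermondeTerm a b q n k) * (1 - a * b * q ^ n) := by
  set g := fun k => qBinom n k q * qPoch a q (k + 1) * qPoch b q (n - k) * a ^ (n - k)
  set h := fun k =>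
    q ^ k * qBinom n k q * qPoch a q k * qPoch b q (n - k + 1) * a ^ (n - k + 1)
  have h_mid (k : ℕ) (hk : k < n) : qVandermondeTerm a b q (n + 1) (k + 1) = g k + h (k + 1) := by
    simp only [qVandermondeTerm, g, h, qBinom_succ_succ hq hk,
      show n + 1 - (k + 1) = n - k by omega, show n - (k + 1) + 1 = n - k by omega]
    ring
  rw [sum_range_add_two_eq_of_pascal _ g h n
      (by simp [qVandermondeTerm, h, qBinom_zero_right hq])
      (by simp [qVandermondeTerm, g, qBinom_self hq]) h_mid,
    ← sum_add_distrib, sum_mul]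
  refine sum_congr rfl fun k hk => ?_
  have hkn : q ^ k * q ^ (n - k) = q ^ n := by
    rw [← pow_add, Nat.add_sub_cancel' (mem_range_succ_iff.mp hk)]
  simp only [qVandermondeTerm, g, h, qPoch_succ, ← hkn]
  ring

lemma sum_qVandermondeTerm {q : ℝ} (hq : ∀ k, qPoch q q k ≠ 0) (a b : ℝ) (n : ℕ) :
    ∑ k ∈ range (n + 1), qVandermondeTerm a b q n k = qPoch (a * b) q n := by
  induction n with
  | zero => simp [qVandermondeTerm, qBinom]
  | succ n ih => rw [sum_qVandermondeTerm_succ hq, ih, qPoch_succ]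

theorem stmt_14 (q : ℝ) (hq : 0 < q) (hq1 : q < 1) (n : ℕ) (a b : ℝ) :
    ∑ k ∈ Finset.range (n+1),
      qBinom n k q * qPoch a q k * qPoch b q (n - k) * a ^ (n - k)
      = qPoch (a * b) q n :=
  sum_qVandermondeTerm (fun k => (qPoch_self_pos hq hq1 k).ne') a b n
end

section
/- Eigenvalues of the type (i) Krawtchouk Markov chain: let K(x,y) = Σ_{z=0}^{min(x,y)} π_K(x−z, N−z, b)·π_K(z, y, a) for x,y ∈ {0,...,N}, with 0 < a,b < 1 and p = b/(1−a+ab). Then for each n, Σ_{y=0}^{N} π_K(y, N, b)·P_n(y, p) = a^n (1−b)^n, where P_n(x,p) = ₂F₁(−n, −x; −N; 1/p) is the Krawtchouk polynomial (a finite sum: Σ_{k=0}^{n} (−n)_k(−x)_k/((−N)_k k!) p^{−k}). -/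
/-- Krawtchouk polynomial `P_n(x,p)` on `{0,...,N}` as a terminating hypergeometric sum. -/
noncomputable def krawtchouk (N n x : ℕ) (p : ℝ) : ℝ :=
  ∑ k ∈ Finset.range (n+1),
    risingFactorial (-(n : ℝ)) k * risingFactorial (-(x : ℝ)) k * p⁻¹ ^ k
      / (risingFactorial (-(N : ℝ)) k * (Nat.factorial k))

open Finset Nat

lemma risingFactorial_neg_natCast (m k : ℕ) :
    risingFactorial (-(m : ℝ)) k = (-1) ^ k * k ! * m.choose k := by
  calc risingFactorial (-(m : ℝ)) k = ∏ j ∈ range k, (-1) * ((m : ℝ) - j) :=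
        prod_congr rfl fun j _ => by ring
    _ = (-1) ^ k * (descPochhammer ℝ k).eval (m : ℝ) := by
        rw [prod_mul_distrib, prod_const, card_range, descPochhammer_eval_eq_prod_range]
    _ = (-1) ^ k * k ! * m.choose k := by
        rw [descPochhammer_eval_eq_descFactorial, descFactorial_eq_factorial_mul_choose]
        push_cast
        ring

lemma krawtchouk_eq_sum_choose (N n x : ℕ) (p : ℝ) :
    krawtchouk N n x p
      = ∑ k ∈ range (n + 1), n.choose k * x.choose k / N.choose k * (-p⁻¹) ^ k := by
  refine sum_congr rfl fun k _ => ?_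
  have hc : (-1) ^ k * (k ! : ℝ) * k ! ≠ 0 := by positivity
  simp only [risingFactorial_neg_natCast]
  calc _ = (-1) ^ k * (k ! : ℝ) * k ! * (n.choose k * x.choose k * (-p⁻¹) ^ k)
          / ((-1) ^ k * (k ! : ℝ) * k ! * N.choose k) := by ring
    _ = _ := by rw [mul_div_mul_left _ _ hc]; ring

lemma sum_piK (M : ℕ) (b : ℝ) : ∑ t ∈ range (M + 1), piK t M b = 1 := by
  calc _ = (b + (1 - b)) ^ M := by
        rw [add_pow]
        exact sum_congr rfl fun t _ => by rw [piK]; ring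
    _ = 1 := by rw [add_sub_cancel, one_pow]

lemma sum_piK_mul_choose (N k : ℕ) (b : ℝ) :
    ∑ y ∈ range (N + 1), piK y N b * y.choose k = N.choose k * b ^ k := by
  rcases lt_or_ge N k with hNk | hkN
  · rw [choose_eq_zero_of_lt hNk, cast_zero, zero_mul]
    exact sum_eq_zero fun y hy => by
      rw [choose_eq_zero_of_lt ((mem_range.1 hy).trans_le hNk), cast_zero, mul_zero]
  obtain ⟨M, rfl⟩ := exists_add_of_le hkN
  have hlow : ∑ y ∈ range k, piK y (k + M) b * y.choose k = 0 :=
    sum_eq_zero fun y hy => by rw [choose_eq_zero_of_lt (mem_range.1 hy), cast_zero, mul_zero]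
  have hshift (t : ℕ) :
      piK (k + t) (k + M) b * (k + t).choose k = (k + M).choose k * b ^ k * piK t M b := by
    have hchoose := choose_mul (n := k + M) (le_add_right k t)
    rw [Nat.add_sub_cancel_left, Nat.add_sub_cancel_left] at hchoose
    have hchooseR := congrArg (Nat.cast : ℕ → ℝ) hchoose
    push_cast at hchooseR
    rw [piK, piK, Nat.add_sub_add_left, pow_add]
    linear_combination (b ^ k * b ^ t * (1 - b) ^ (M - t)) * hchooseR
  rw [show k + M + 1 = k + (M + 1) by ring, sum_range_add, hlow, zero_add,
    sum_congr rfl fun t _ => hshift t, ← mul_sum, sum_piK, mul_one]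

lemma sum_piK_mul_krawtchouk (N n : ℕ) (hn : n ≤ N) (b p : ℝ) :
    ∑ y ∈ range (N + 1), piK y N b * krawtchouk N n y p = (1 - b / p) ^ n := by
  simp_rw [krawtchouk_eq_sum_choose, mul_sum]
  rw [sum_comm]
  have hterm (k : ℕ) (hk : k ∈ range (n + 1)) :
      ∑ y ∈ range (N + 1), piK y N b * (n.choose k * y.choose k / N.choose k * (-p⁻¹) ^ k)
        = n.choose k * (-(b / p)) ^ k := by
    have hNk : (N.choose k : ℝ) ≠ 0 :=
      cast_ne_zero.2 (choose_pos ((Nat.lt_succ_iff.1 (mem_range.1 hk)).trans hn)).ne'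
    calc _ = n.choose k / N.choose k * (-p⁻¹) ^ k
            * ∑ y ∈ range (N + 1), piK y N b * y.choose k := by
          rw [mul_sum]
          exact sum_congr rfl fun _ _ => by ring
      _ = _ := by
          rw [sum_piK_mul_choose]
          field_simp
          ring
  rw [sum_congr rfl hterm, sub_eq_neg_add, add_pow]
  exact sum_congr rfl fun _ _ => by ring

theorem stmt_17_general (a b : ℝ) (hb : 0 < b)
    (N n : ℕ) (hn : n ≤ N) :
    ∑ y ∈ Finset.range (N+1), piK y N b * krawtchouk N n y (b / (1 - a + a * b))
      = a ^ n * (1 - b) ^ n := by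
  rw [sum_piK_mul_krawtchouk N n hn, div_div_cancel₀ hb.ne', ← mul_pow]
  ring

theorem stmt_17 (a b : ℝ) (ha : 0 < a) (ha1 : a < 1) (hb : 0 < b) (hb1 : b < 1)
    (N n : ℕ) (hn : n ≤ N) :
    ∑ y ∈ Finset.range (N+1), piK y N b * krawtchouk N n y (b / (1 - a + a * b))
      = a ^ n * (1 - b) ^ n :=
  stmt_17_general a b hb N n hn
end
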